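/- arXiv:1806.01829 — 3 statements merged into one kernel-verified Lean document; each statement's English description precedes it below -/
import Mathlib

section
/- For any matrix A ∈ ℝ^{m×n}, if spark(A) > 2K, then for every y ∈ ℝᵐ there is at most one K-sparse vector x with A x = y. -/
/-- The number of nonzero entries of a vector (its ℓ⁰ "norm"). -/
noncomputable def sparseCount {n : ℕ} (x : Fin n → ℝ) : ℕ :=
  (Finset.univ.filter (fun i => x i ≠ 0)).card

theorem sparseCount_sub_le {n : ℕ} (x y : Fin n → ℝ) :
    sparseCount (x - y) ≤ sparseCount x + sparseCount y := by
  have hsupp : Finset.univ.filter (fun i => (x - y) i ≠ 0) ⊆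
      Finset.univ.filter (fun i => x i ≠ 0) ∪ Finset.univ.filter (fun i => y i ≠ 0) := by
    intro i
    simp only [Finset.mem_filter, Finset.mem_union, Finset.mem_univ, true_and, Pi.sub_apply]
    contrapose!
    rintro ⟨hx, hy⟩
    rw [hx, hy, sub_zero]
  exact (Finset.card_le_card hsupp).trans (Finset.card_union_le _ _)

/-- If `spark(A) > 2K` (every nonzero null vector of `A` has more than `2K`
nonzero entries), then for every `y` there is at most one `K`-sparse `x` with `A x = y`. -/
theorem unique_sparse_solution_of_spark {m n K : ℕ} (A : Matrix (Fin m) (Fin n) ℝ)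
    (hspark : ∀ h : Fin n → ℝ, h ≠ 0 → A.mulVec h = 0 → 2 * K < sparseCount h) :
    ∀ (y : Fin m → ℝ) (x₁ x₂ : Fin n → ℝ),
      sparseCount x₁ ≤ K → sparseCount x₂ ≤ K →
      A.mulVec x₁ = y → A.mulVec x₂ = y → x₁ = x₂ := by
  intro y x₁ x₂ hx₁ hx₂ hAx₁ hAx₂
  rw [← sub_eq_zero]
  by_contra hne
  have hker : A.mulVec (x₁ - x₂) = 0 := by rw [Matrix.mulVec_sub, hAx₁, hAx₂, sub_self]
  have hspark_diff := hspark _ hne hker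
  have hsub := sparseCount_sub_le x₁ x₂
  omega
end

section
/- Conversely, if for every y ∈ ℝᵐ there is at most one K-sparse vector x with A x = y, then spark(A) > 2K. -/
lemma sparseCount_le_card_of_forall_ne_zero_mem {n : ℕ} {x : Fin n → ℝ} {T : Finset (Fin n)}
    (hT : ∀ i, x i ≠ 0 → i ∈ T) : sparseCount x ≤ T.card :=
  Finset.card_le_card fun i hi => hT i (Finset.mem_filter.mp hi).2

lemma sparseCount_neg {n : ℕ} (x : Fin n → ℝ) : sparseCount (-x) = sparseCount x := by
  simp only [sparseCount, Pi.neg_apply, ne_eq, neg_eq_zero]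

lemma exists_add_eq_of_sparseCount_le_add {n K L : ℕ} {x : Fin n → ℝ}
    (hx : sparseCount x ≤ K + L) :
    ∃ u v : Fin n → ℝ, u + v = x ∧ (∀ i, u i = 0 ∨ v i = 0) ∧
      sparseCount u ≤ K ∧ sparseCount v ≤ L := by
  set S := Finset.univ.filter (fun i => x i ≠ 0)
  obtain ⟨T, hTS, hT⟩ := Finset.exists_subset_card_eq (min_le_left S.card K)
  refine ⟨fun i => if i ∈ T then x i else 0, fun i => if i ∈ T then 0 else x i,
    ?_, fun i => ?_, ?_, ?_⟩
  · funext i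
    by_cases hi : i ∈ T <;> simp [hi]
  · by_cases hi : i ∈ T <;> simp [hi]
  · calc sparseCount _ ≤ T.card :=
          sparseCount_le_card_of_forall_ne_zero_mem fun i hi => by_contra fun h => hi (if_neg h)
      _ ≤ K := hT.trans_le (min_le_right _ _)
  · calc sparseCount _ ≤ (S \ T).card := by
          refine sparseCount_le_card_of_forall_ne_zero_mem fun i hi => ?_
          by_cases hiT : i ∈ T
          · simp [hiT] at hi
          · simp_all [S]
      _ ≤ L := by
          have : S.card ≤ K + L := hx
          rw [Finset.card_sdiff_of_subset hTS, hT]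
          omega

/-- If for every `y` there is at most one `K`-sparse `x` with `A x = y`, then
`spark(A) > 2K`: every nonzero null vector of `A` has more than `2K` nonzero entries. -/
theorem spark_of_unique_sparse_solution {m n K : ℕ} (A : Matrix (Fin m) (Fin n) ℝ)
    (huniq : ∀ (y : Fin m → ℝ) (x₁ x₂ : Fin n → ℝ),
      sparseCount x₁ ≤ K → sparseCount x₂ ≤ K →
      A.mulVec x₁ = y → A.mulVec x₂ = y → x₁ = x₂) :
    ∀ h : Fin n → ℝ, h ≠ 0 → A.mulVec h = 0 → 2 * K < sparseCount h := by
  intro h hne hAh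
  by_contra! hle
  obtain ⟨u, v, rfl, hdisj, hu, hv⟩ := exists_add_eq_of_sparseCount_le_add (two_mul K ▸ hle)
  have hAuv : A.mulVec u = A.mulVec (-v) := by
    rw [Matrix.mulVec_neg]
    exact eq_neg_of_add_eq_zero_left (by rwa [← Matrix.mulVec_add])
  have huv : u = -v := huniq _ u (-v) hu (by rwa [sparseCount_neg]) rfl hAuv.symm
  refine hne (funext fun i => ?_)
  have hui : u i = -v i := congrFun huv i
  rcases hdisj i with h0 | h0 <;> simp_all
end

section
/- For any matrix A with unit-normed columns, spark(A) ≥ 1 + 1/μ(A), where μ(A) is the coherence of A. -/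
/-!
Let `h ≠ 0` lie in the kernel of `A`, so also in the kernel of the Gram matrix `G = Aᵀ A`, whose
diagonal entries are `1` and whose off-diagonal entries are at most `μ` in absolute value.
At an index `i` where `|h i|` is maximal, row `i` of `G h = 0` gives
`|h i| ≤ ∑_{j ∈ supp h, j ≠ i} |G i j| |h j| ≤ (|supp h| - 1) μ |h i|`, so `1 ≤ μ (|supp h| - 1)`.
-/

open Finset Matrix

namespace Matrix

theorem transpose_mul_self_apply {m n : Type*} [Fintype m] (A : Matrix m n ℝ) (i j : n) :
    (Aᵀ * A) i j = ∑ k, A k i * A k j := by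
  simp [mul_apply]

variable {ι : Type*} [Fintype ι] [DecidableEq ι]

theorem abs_le_sum_abs_offDiag_of_mulVec_apply_eq_zero {G : Matrix ι ι ℝ} {h : ι → ℝ} {i : ι}
    (hGi : G i i = 1) (hGh : (G *ᵥ h) i = 0) :
    |h i| ≤ ∑ j ∈ ({j | h j ≠ 0} : Finset ι).erase i, |G i j| * |h j| := by
  have hrow : h i + ∑ j ∈ univ.erase i, G i j * h j = 0 := by
    rwa [mulVec, dotProduct, ← add_sum_erase _ _ (mem_univ i), hGi, one_mul] at hGh
  calc |h i| = |∑ j ∈ univ.erase i, G i j * h j| := by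
        rw [eq_neg_of_add_eq_zero_left hrow, abs_neg]
    _ ≤ ∑ j ∈ univ.erase i, |G i j| * |h j| :=
        (abs_sum_le_sum_abs _ _).trans_eq (by simp only [abs_mul])
    _ = ∑ j ∈ ({j | h j ≠ 0} : Finset ι).erase i, |G i j| * |h j| := by
        rw [← filter_erase, sum_filter_of_ne]
        intro j _ hj hj0
        simp [hj0] at hj

theorem one_le_mul_card_support_sub_one_of_mulVec_eq_zero {G : Matrix ι ι ℝ} {μ : ℝ}
    (hdiag : ∀ i, G i i = 1) (hoff : ∀ i j, i ≠ j → |G i j| ≤ μ)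
    {h : ι → ℝ} (hh : h ≠ 0) (hGh : G *ᵥ h = 0) :
    1 ≤ μ * ((#{i | h i ≠ 0} : ℕ) - 1 : ℝ) := by
  set S : Finset ι := {i | h i ≠ 0}
  have hS : S.Nonempty := by
    obtain ⟨i, hi⟩ := Function.ne_iff.mp hh
    exact ⟨i, mem_filter.mpr ⟨mem_univ i, hi⟩⟩
  obtain ⟨i, hiS, hmax⟩ := S.exists_max_image (fun i => |h i|) hS
  have hpos : 0 < |h i| := abs_pos.mpr (mem_filter.mp hiS).2
  have hbound : |h i| ≤ ((S.card : ℝ) - 1) * μ * |h i| :=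
    calc |h i| ≤ ∑ j ∈ S.erase i, |G i j| * |h j| :=
          abs_le_sum_abs_offDiag_of_mulVec_apply_eq_zero (hdiag i) (congrFun hGh i)
      _ ≤ ∑ j ∈ S.erase i, μ * |h i| := by
          refine sum_le_sum fun j hj => ?_
          obtain ⟨hji, hjS⟩ := mem_erase.mp hj
          exact mul_le_mul (hoff i j (Ne.symm hji)) (hmax j hjS) (abs_nonneg _)
            ((abs_nonneg _).trans (hoff i j (Ne.symm hji)))
      _ = ((S.card : ℝ) - 1) * μ * |h i| := by
          rw [sum_const, card_erase_of_mem hiS, nsmul_eq_mul,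
            Nat.cast_sub (card_pos.mpr hS), Nat.cast_one, mul_assoc]
  rw [mul_comm]
  exact le_of_mul_le_mul_right (by rwa [one_mul]) hpos

end Matrix

/-- For a matrix `A` with unit-norm columns and coherence `μ > 0`,
`spark(A) ≥ 1 + 1/μ`: every nonzero null vector has at least `1 + 1/μ` nonzero entries. -/
theorem spark_ge_one_add_inv_coherence {m n : ℕ} (A : Matrix (Fin m) (Fin n) ℝ)
    (hcols : ∀ j, (∑ i, (A i j) ^ 2) = 1)
    (μ : ℝ) (hμpos : 0 < μ)
    (hμ : IsGreatest {r : ℝ | ∃ i j : Fin n, i ≠ j ∧ r = |∑ k, A k i * A k j|} μ) :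
    ∀ h : Fin n → ℝ, h ≠ 0 → A.mulVec h = 0 → 1 + 1 / μ ≤ (sparseCount h : ℝ) := by
  intro h hh hAh
  have hgram : (Aᵀ * A) *ᵥ h = 0 := by rw [← mulVec_mulVec, hAh, mulVec_zero]
  have hdiag (i : Fin n) : (Aᵀ * A) i i = 1 := by
    simpa only [transpose_mul_self_apply, sq] using hcols i
  have hoff (i j : Fin n) (hij : i ≠ j) : |(Aᵀ * A) i j| ≤ μ :=
    hμ.2 ⟨i, j, hij, by rw [transpose_mul_self_apply]⟩
  have hkey := one_le_mul_card_support_sub_one_of_mulVec_eq_zero hdiag hoff hh hgram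
  have : 1 / μ ≤ (sparseCount h : ℝ) - 1 := by
    rw [div_le_iff₀ hμpos]
    simpa only [sparseCount, mul_comm] using hkey
  linarith
end
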